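/- arXiv:2103.05604 — 2 statements merged into one kernel-verified Lean document; each statement's English description precedes it below -/
import Mathlib

section
/- Run Algorithm 2 on an unweighted SPPT instance with distortion at most μ. At every time outside of the execution of the procedures UponJobRelease and UponHeavyF, no ordered pair of jobs in bin F forms a violation; that is, there are no jobs q₁, q₂ in Q_F with π_F(q₁) > π_F(q₂) and μ·p̃(q₂) ≤ p̃(q₁). -/
open MeasureTheory
open scoped Classical

noncomputable section

/-- A configuration of Algorithm 2: the pending jobs are kept in two bins,
a full bin `QF` and a partial bin `QP`; each bin carries a bijective priority map
onto `{1, …, size of bin}`, and every pending job has a remaining processing time. -/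
structure Config (n : ℕ) where
  QF : Finset (Fin n)
  QP : Finset (Fin n)
  rem : Fin n → ℝ
  prF : Fin n → ℕ
  prP : Fin n → ℕ
  disj : Disjoint QF QP
  bijF : Set.BijOn prF (QF : Set (Fin n)) (Set.Icc 1 QF.card)
  bijP : Set.BijOn prP (QP : Set (Fin n)) (Set.Icc 1 QP.card)

variable {n : ℕ}

/-- `wbase q`: the number of jobs in `q`'s own bin whose priority is at most that
of `q` (for unit weights this is the total weight of `base(q)`). -/
def wbase (C : Config n) (q : Fin n) : ℕ :=
  if q ∈ C.QF then (C.QF.filter fun a => C.prF a ≤ C.prF q).card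
  else (C.QP.filter fun a => C.prP a ≤ C.prP q).card

/-- The volume covered by a bar at height `x`: the sum over pending jobs `q`
of the remaining processing time of `q` if `x ≥ wbase q`, and `0` otherwise. -/
def cov (C : Config n) (x : ℝ) : ℝ :=
  ∑ q ∈ C.QF ∪ C.QP, if (wbase C q : ℝ) ≤ x then C.rem q else 0

/-- `V`: the total remaining volume of pending jobs. -/
def vol (C : Config n) : ℝ :=
  ∑ q ∈ C.QF ∪ C.QP, C.rem q

/-- The ordered pair `(q₁, q₂)` of jobs of the full bin is a violation if `q₁` has
higher priority but `μ · p̃ q₂ ≤ p̃ q₁`. -/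
def IsViolation (μ : ℝ) (pt : Fin n → ℝ) (C : Config n) (q₁ q₂ : Fin n) : Prop :=
  q₁ ∈ C.QF ∧ q₂ ∈ C.QF ∧ C.prF q₂ < C.prF q₁ ∧ μ * pt q₂ ≤ pt q₁

/-- No ordered pair of jobs of the full bin forms a violation. -/
def NoViolations (μ : ℝ) (pt : Fin n → ℝ) (C : Config n) : Prop :=
  ∀ q₁ q₂, ¬ IsViolation μ pt C q₁ q₂

/-- The priorities of the full bin after releasing job `q`: `q` is first inserted at the
top (priority `|QF| + 1`), and then the cyclic rotation fixing all the violations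
involving `q` is applied: `q` receives the lowest priority of a job in violation with
it, each job in violation with `q` moves up to the priority of the next higher-priority
violating job (the highest-priority one receiving `q`'s top priority `|QF| + 1`),
and all other priorities are unchanged. -/
def rotatedPr (μ : ℝ) (pt : Fin n → ℝ) (C : Config n) (q : Fin n) : Fin n → ℕ :=
  fun a =>
    if a = q then
      WithBot.unbotD (C.QF.card + 1) ((C.QF.filter fun b => μ * pt b ≤ pt q).image C.prF).min
    else if a ∈ C.QF.filter (fun b => μ * pt b ≤ pt q) then
      WithBot.unbotD (C.QF.card + 1)
        ((((C.QF.filter fun b => μ * pt b ≤ pt q).filter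
            fun b => C.prF a < C.prF b).image C.prF).min)
    else C.prF a

/-- `UponJobRelease q` of Algorithm 2 turns configuration `C` into `C'`:
the new job `q` (full, so its remaining time is `p q`) enters the full bin and the
rotation fixing all violations involving `q` is applied. -/
def ReleaseStep (μ : ℝ) (p pt : Fin n → ℝ) (C C' : Config n) (q : Fin n) : Prop :=
  q ∉ C.QF ∧ q ∉ C.QP ∧
  C'.QF = insert q C.QF ∧ C'.QP = C.QP ∧
  C'.rem q = p q ∧ (∀ a, a ≠ q → C'.rem a = C.rem a) ∧
  (∀ a ∈ C'.QF, C'.prF a = rotatedPr μ pt C q a) ∧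
  (∀ a ∈ C.QP, C'.prP a = C.prP a)

/-- `UponHeavyF` of Algorithm 2 turns configuration `C` into `C'`: it is called as soon
as `|QF| > |QP|` (so `|QF| = |QP| + 1`), and it moves the top-priority job of the full
bin to the top priority of the partial bin (LIFO). -/
def MoveStep (C C' : Config n) (q : Fin n) : Prop :=
  C.QF.card = C.QP.card + 1 ∧ q ∈ C.QF ∧ C.prF q = C.QF.card ∧
  C'.QF = C.QF.erase q ∧ C'.QP = insert q C.QP ∧ C'.rem = C.rem ∧
  (∀ a ∈ C'.QF, C'.prF a = C.prF a) ∧ (∀ a ∈ C.QP, C'.prP a = C.prP a) ∧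
  C'.prP q = C.QP.card + 1

/-- Processing for a duration `d`: the top-priority job of the partial bin is processed,
decreasing its remaining time by `d`. -/
def ProcessStep (C C' : Config n) (q : Fin n) (d : ℝ) : Prop :=
  C.QF.card ≤ C.QP.card ∧ q ∈ C.QP ∧ C.prP q = C.QP.card ∧
  0 ≤ d ∧ d ≤ C.rem q ∧
  C'.QF = C.QF ∧ C'.QP = C.QP ∧ C'.prF = C.prF ∧ C'.prP = C.prP ∧
  C'.rem q = C.rem q - d ∧ (∀ a, a ≠ q → C'.rem a = C.rem a)

/-- A fully processed job (the top-priority job of the partial bin, with zero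
remaining time) is completed and leaves the system. -/
def CompleteStep (C C' : Config n) (q : Fin n) : Prop :=
  q ∈ C.QP ∧ C.prP q = C.QP.card ∧ C.rem q = 0 ∧
  C'.QF = C.QF ∧ C'.QP = C.QP.erase q ∧ C'.prF = C.prF ∧
  (∀ a ∈ C'.QP, C'.prP a = C.prP a) ∧ C'.rem = C.rem
/-- The configurations reachable by Algorithm 2 (run steps in arbitrary order from the
empty configuration, releases/moves/processing/completions). -/
inductive Reachable {n : ℕ} (μ : ℝ) (p pt : Fin n → ℝ) : Config n → Prop
  | init (C : Config n) (hF : C.QF = ∅) (hP : C.QP = ∅) : Reachable μ p pt C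
  | release (C C' : Config n) (q : Fin n) (h : Reachable μ p pt C)
      (hs : ReleaseStep μ p pt C C' q) : Reachable μ p pt C'
  | move (C C' : Config n) (q : Fin n) (h : Reachable μ p pt C)
      (hs : MoveStep C C' q) : Reachable μ p pt C'
  | process (C C' : Config n) (q : Fin n) (d : ℝ) (h : Reachable μ p pt C)
      (hs : ProcessStep C C' q d) : Reachable μ p pt C'
  | complete (C C' : Config n) (q : Fin n) (h : Reachable μ p pt C)
      (hs : CompleteStep C C' q) : Reachable μ p pt C'

/-!
Every step preserves the invariant. Moves, processing and completions only remove jobs from `F`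
and keep the remaining priorities. For the release of `q`, note that `μ * p̃ b ≤ p̃ a` is a
transitive relation and, because the distortion bound forces `μ > 1`, an asymmetric one. The
rotation moves `q` down to the lowest priority of the jobs it violates with, and each of those
up to the next one; so a violation after the release would yield, by transitivity, a violation
among the old jobs of `F`, which the induction hypothesis excludes.
-/

namespace Finset

variable {α β : Type*} [LinearOrder β] {f : α → β} {s : Finset α}

-- `Finset.min` is `WithTop`-valued; `rotatedPr` reads it through `WithBot.unbotD`, i.e. as
-- an `Option` whose `none` (the empty case) defaults to `d`.
theorem unbotD_min_image_le {b : α} (hb : b ∈ s) (d : β) :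
    WithBot.unbotD d (s.image f).min ≤ f b := by
  obtain ⟨m, hm⟩ := min_of_mem (mem_image_of_mem f hb)
  have hmb : (m : WithTop β) ≤ f b := hm ▸ min_le (mem_image_of_mem f hb)
  rw [hm]
  exact WithTop.coe_le_coe.mp hmb

theorem unbotD_min_image_induction {d : β} (P : β → Prop) (hd : P d) (hs : ∀ b ∈ s, P (f b)) :
    P (WithBot.unbotD d (s.image f).min) := by
  cases hm : (s.image f).min with
  | top => exact hd
  | coe m =>
    obtain ⟨b, hb, rfl⟩ := mem_image.mp (mem_of_min hm)
    exact hs b hb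

end Finset

theorem Config.prF_le_card (C : Config n) {a : Fin n} (ha : a ∈ C.QF) : C.prF a ≤ C.QF.card :=
  (C.bijF.mapsTo ha).2

section Release

variable {μ : ℝ} {pt : Fin n → ℝ} {C : Config n} {q a b : Fin n}

theorem rotatedPr_self_le (hb : b ∈ C.QF) (hbq : μ * pt b ≤ pt q) :
    rotatedPr μ pt C q q ≤ C.prF b := by
  simp only [rotatedPr, if_true]
  exact Finset.unbotD_min_image_le (Finset.mem_filter.mpr ⟨hb, hbq⟩) _

theorem rotatedPr_of_not_le (haq : a ≠ q) (ha : ¬ μ * pt a ≤ pt q) :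
    rotatedPr μ pt C q a = C.prF a := by
  simp [rotatedPr, haq, ha]

theorem rotatedPr_eq_of_le (hq : q ∉ C.QF) (ha : a ∈ C.QF) (haq : μ * pt a ≤ pt q) :
    rotatedPr μ pt C q a = WithBot.unbotD (C.QF.card + 1)
      ((((C.QF.filter fun b => μ * pt b ≤ pt q).filter
        fun b => C.prF a < C.prF b).image C.prF).min) := by
  simp only [rotatedPr, if_neg (ne_of_mem_of_not_mem ha hq), Finset.mem_filter, ha, haq,
    and_self, if_true]

theorem prF_le_rotatedPr (hq : q ∉ C.QF) (ha : a ∈ C.QF) : C.prF a ≤ rotatedPr μ pt C q a := by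
  by_cases haq : μ * pt a ≤ pt q
  · rw [rotatedPr_eq_of_le hq ha haq]
    exact Finset.unbotD_min_image_induction (C.prF a ≤ ·) (Nat.le_succ_of_le (C.prF_le_card ha))
      fun c hc => (Finset.mem_filter.mp hc).2.le
  · exact (rotatedPr_of_not_le (ne_of_mem_of_not_mem ha hq) haq).ge

theorem rotatedPr_le_of_lt (hq : q ∉ C.QF) (ha : a ∈ C.QF) (haq : μ * pt a ≤ pt q)
    (hb : b ∈ C.QF) (hbq : μ * pt b ≤ pt q) (hab : C.prF a < C.prF b) :
    rotatedPr μ pt C q a ≤ C.prF b := by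
  rw [rotatedPr_eq_of_le hq ha haq]
  exact Finset.unbotD_min_image_le (by simp [hb, hbq, hab]) _

theorem not_rotatedPr_self_lt (ha : a ∈ C.QF)
    (h : ∀ b ∈ C.QF, μ * pt b ≤ pt q → ¬ C.prF b < C.prF a) :
    ¬ rotatedPr μ pt C q q < C.prF a := by
  simp only [rotatedPr, if_true]
  refine Finset.unbotD_min_image_induction (¬ · < C.prF a) ?_ fun b hb => ?_
  · exact (Nat.lt_succ_of_le (C.prF_le_card ha)).not_gt
  · exact h b (Finset.mem_filter.mp hb).1 (Finset.mem_filter.mp hb).2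

end Release

section Invariant

variable {μ : ℝ} {p pt : Fin n → ℝ} {C C' : Config n} {q : Fin n}

theorem mul_pt_le_trans {a b c : Fin n} (hμ : 1 ≤ μ) (hb : 0 < pt b)
    (hab : μ * pt b ≤ pt a) (hbc : μ * pt c ≤ pt b) : μ * pt c ≤ pt a := by
  nlinarith

theorem not_mul_pt_le_of_mul_pt_le {a b : Fin n} (hμ : 1 < μ) (ha : 0 < pt a)
    (hab : μ * pt b ≤ pt a) : ¬ μ * pt a ≤ pt b := fun hba => by
  have hpa : pt a < μ * pt a := by nlinarith
  have hpb : pt b < μ * pt b := by nlinarith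
  linarith

theorem NoViolations.of_QF_eq_empty (hF : C.QF = ∅) : NoViolations μ pt C :=
  fun _ _ hv => Finset.notMem_empty _ (hF ▸ hv.1)

theorem NoViolations.of_subset (hC : NoViolations μ pt C) (hsub : C'.QF ⊆ C.QF)
    (hpr : ∀ a ∈ C'.QF, C'.prF a = C.prF a) : NoViolations μ pt C' := by
  rintro q₁ q₂ ⟨h₁, h₂, hlt, hle⟩
  rw [hpr q₁ h₁, hpr q₂ h₂] at hlt
  exact hC q₁ q₂ ⟨hsub h₁, hsub h₂, hlt, hle⟩

theorem NoViolations.release (hμ : 1 < μ) (hpt : ∀ a, 0 < pt a) (hC : NoViolations μ pt C)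
    (hs : ReleaseStep μ p pt C C' q) : NoViolations μ pt C' := by
  obtain ⟨hq, -, hQF, -, -, -, hpr, -⟩ := hs
  rintro q₁ q₂ ⟨h₁, h₂, hlt, hle⟩
  rw [hpr q₁ h₁, hpr q₂ h₂] at hlt
  rw [hQF, Finset.mem_insert] at h₁ h₂
  rcases h₁ with rfl | h₁ <;> rcases h₂ with rfl | h₂
  · exact hlt.false
  · exact hlt.not_ge ((rotatedPr_self_le h₂ hle).trans (prF_le_rotatedPr hq h₂))
  · have h₁q : ¬ μ * pt q₁ ≤ pt q₂ := not_mul_pt_le_of_mul_pt_le hμ (hpt q₁) hle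
    rw [rotatedPr_of_not_le (ne_of_mem_of_not_mem h₁ hq) h₁q] at hlt
    refine not_rotatedPr_self_lt h₁ (fun b hb hbq hlt' => ?_) hlt
    exact hC q₁ b ⟨h₁, hb, hlt', mul_pt_le_trans hμ.le (hpt q₂) hle hbq⟩
  · have hne : C.prF q₁ ≠ C.prF q₂ := fun h => by
      rw [C.bijF.injOn h₁ h₂ h] at hlt
      exact hlt.false
    by_cases h₁q : μ * pt q₁ ≤ pt q
    · have h₂q := mul_pt_le_trans hμ.le (hpt q₁) h₁q hle
      have h₁₂ : C.prF q₁ < C.prF q₂ :=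
        hne.lt_of_le (not_lt.mp fun h => hC q₁ q₂ ⟨h₁, h₂, h, hle⟩)
      exact hlt.not_ge
        ((rotatedPr_le_of_lt hq h₁ h₁q h₂ h₂q h₁₂).trans (prF_le_rotatedPr hq h₂))
    · rw [rotatedPr_of_not_le (ne_of_mem_of_not_mem h₁ hq) h₁q] at hlt
      exact hC q₁ q₂ ⟨h₁, h₂, (prF_le_rotatedPr hq h₂).trans_lt hlt, hle⟩

end Invariant

theorem no_violations_invariant_general
    (n : ℕ) (μ : ℝ) (p pt : Fin n → ℝ)
    (hpt : ∀ q, 0 < pt q)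
    (hdist : ∀ q, pt q ≤ p q ∧ p q < μ * pt q)
    (C : Config n) (h : Reachable μ p pt C) :
    NoViolations μ pt C := by
  induction h with
  | init _ hF _ => exact .of_QF_eq_empty hF
  | release _ _ q _ hs ih =>
    have hμ : 1 < μ := (lt_mul_iff_one_lt_left (hpt q)).mp ((hdist q).1.trans_lt (hdist q).2)
    exact ih.release hμ hpt hs
  | move _ _ _ _ hs ih =>
    obtain ⟨-, -, -, hQF, -, -, hpr, -⟩ := hs
    exact ih.of_subset (hQF ▸ Finset.erase_subset _ _) hpr
  | process _ _ _ _ _ hs ih =>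
    obtain ⟨-, -, -, -, -, hQF, -, hpr, -⟩ := hs
    exact ih.of_subset hQF.subset fun a _ => congrFun hpr a
  | complete _ _ _ _ hs ih =>
    obtain ⟨-, -, -, hQF, -, hpr, -⟩ := hs
    exact ih.of_subset hQF.subset fun a _ => congrFun hpr a

/-- In a run of Algorithm 2 on an unweighted SPPT instance with
distortion at most `μ`, at every time outside of the execution of the procedures
(i.e. in every reachable configuration) no ordered pair of jobs of the full bin
forms a violation. -/
theorem no_violations_invariant
    (n : ℕ) (μ : ℝ) (p pt : Fin n → ℝ)
    (hp : ∀ q, 0 < p q) (hpt : ∀ q, 0 < pt q)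
    (hdist : ∀ q, pt q ≤ p q ∧ p q < μ * pt q)
    (C : Config n) (h : Reachable μ p pt C) :
    NoViolations μ pt C :=
  no_violations_invariant_general n μ p pt hpt hdist C h
end
end

section
/- Run Algorithm 2 in the semiclairvoyant model SC[ρ] (with predictions p̃(q) = ρ^{⌊log_ρ p(q)⌋} and μ = ρ), and let θ' = ⌈ρ⌉. If a job q is released at time t (the procedure UponJobRelease(q) is called), then for every real x ≥ 0: cov(x + θ', t) ≥ cov(x, t⁻) + p(q). -/
open MeasureTheory
open scoped Classical

noncomputable section

variable {n : ℕ}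

/-!
Releasing `q` moves every pending job up by at most one level in its bin, so everything
covered by `x` before the release is covered by `x + θ'` after it. If `q` lands at a level at
most `x + θ'`, it contributes `p(q)`. Otherwise all jobs in violation with `q` lie above
`x + θ'`; since the full bin had no violations, they form its top segment, so the `θ'` full
jobs at levels in `(x, x + θ']` keep their level and become covered. None of them is in
violation with `q`, and predictions are powers of `ρ`, so each has `p̃ ≥ p̃(q)`. Together they
contribute at least `θ' p̃(q) ≥ ρ p̃(q) > p(q)`.
-/

open Finset

lemma Set.BijOn.card_filter_comp_eq {α : Type*} {s : Finset α} {m : ℕ} {pr : α → ℕ}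
    (h : Set.BijOn pr s (Set.Icc 1 m)) (P : ℕ → Prop) [DecidablePred P] :
    #{a ∈ s | P (pr a)} = #{j ∈ Finset.Icc 1 m | P j} := by
  refine card_nbij pr (fun a ha => ?_) (h.injOn.mono (Finset.coe_subset.2 (filter_subset _ _)))
    (fun j hj => ?_)
  · obtain ⟨ha, hP⟩ := mem_filter.1 ha
    exact mem_filter.2 ⟨by simpa using h.mapsTo ha, hP⟩
  · obtain ⟨hj, hP⟩ := mem_filter.1 hj
    obtain ⟨a, ha, rfl⟩ := h.surjOn (by simpa using hj)
    exact ⟨a, mem_filter.2 ⟨ha, hP⟩, rfl⟩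

lemma Set.BijOn.card_filter_le_eq {α : Type*} {s : Finset α} {m : ℕ} {pr : α → ℕ}
    (h : Set.BijOn pr s (Set.Icc 1 m)) {a : α} (ha : a ∈ s) :
    #{b ∈ s | pr b ≤ pr a} = pr a := by
  have hm : pr a ≤ m := (h.mapsTo ha).2
  rw [h.card_filter_comp_eq (· ≤ pr a),
    show {j ∈ Finset.Icc 1 m | j ≤ pr a} = Finset.Icc 1 (pr a) by
      ext j; simp only [mem_filter, Finset.mem_Icc]; omega,
    Nat.card_Icc, Nat.add_sub_cancel]

lemma Set.BijOn.le_card_filter_Ioc {α : Type*} {s : Finset α} {m θ : ℕ} {pr : α → ℕ}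
    (h : Set.BijOn pr s (Set.Icc 1 m)) {x : ℝ} (hx : 0 ≤ x) (hxm : x + θ < m + 1) :
    θ ≤ #{a ∈ s | x < pr a ∧ (pr a : ℝ) ≤ x + θ} := by
  rw [h.card_filter_comp_eq (fun j : ℕ => x < j ∧ (j : ℝ) ≤ x + θ)]
  have hsub : Finset.Ioc ⌊x⌋₊ (⌊x⌋₊ + θ) ⊆ {j ∈ Finset.Icc 1 m | x < j ∧ (j : ℝ) ≤ x + θ} := by
    intro j hj
    obtain ⟨hj₁, hj₂⟩ := Finset.mem_Ioc.1 hj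
    have hxj : x < j := (Nat.lt_floor_add_one x).trans_le (by exact_mod_cast hj₁)
    have hjx : (j : ℝ) ≤ x + θ := by
      have : (j : ℝ) ≤ ⌊x⌋₊ + θ := by exact_mod_cast hj₂
      linarith [Nat.floor_le hx]
    have hjm : j < m + 1 := by exact_mod_cast hjx.trans_lt hxm
    exact mem_filter.2 ⟨Finset.mem_Icc.2 ⟨by omega, by omega⟩, hxj, hjx⟩
  simpa using card_le_card hsub

section UnbotDMin

variable {α : Type*} [LinearOrder α] {s : Finset α} {a d : α}

lemma unbotD_min_of_nonempty (hs : s.Nonempty) : WithBot.unbotD d s.min = s.min' hs := by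
  rw [← coe_min' hs]
  rfl

lemma unbotD_min_le (ha : a ∈ s) : WithBot.unbotD d s.min ≤ a := by
  rw [unbotD_min_of_nonempty ⟨a, ha⟩]
  exact min'_le s a ha

lemma unbotD_min_le_default (h : ∀ b ∈ s, b ≤ d) : WithBot.unbotD d s.min ≤ d := by
  rcases s.eq_empty_or_nonempty with rfl | hs
  · exact le_rfl
  · rw [unbotD_min_of_nonempty hs]
    exact h _ (min'_mem s hs)

lemma unbotD_min_eq_of_isLeast (h : IsLeast (s : Set α) a) : WithBot.unbotD d s.min = a := by
  rw [unbotD_min_of_nonempty ⟨a, h.1⟩]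
  exact (isLeast_min' s _).unique h

end UnbotDMin

lemma Real.zpow_floor_logb_le {b y : ℝ} (hb : 1 < b) (hy : 0 < y) : b ^ ⌊logb b y⌋ ≤ y := by
  rw [← Real.rpow_intCast, ← Real.le_logb_iff_rpow_le hb hy]
  exact Int.floor_le _

lemma Real.lt_mul_zpow_floor_logb {b y : ℝ} (hb : 1 < b) (hy : 0 < y) :
    y < b * b ^ ⌊logb b y⌋ := by
  rw [← zpow_one_add₀ (by positivity), ← Real.rpow_intCast, ← Real.logb_lt_iff_lt_rpow hb hy]
  push_cast
  linarith [Int.lt_floor_add_one (logb b y)]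

lemma mul_zpow_le_zpow_or_zpow_le_zpow {b : ℝ} (hb : 1 < b) (i j : ℤ) :
    b * b ^ i ≤ b ^ j ∨ b ^ j ≤ b ^ i := by
  rcases lt_or_ge i j with hij | hji
  · left
    rw [← zpow_one_add₀ (by positivity)]
    exact zpow_le_zpow_right₀ hb.le (by omega)
  · exact Or.inr (zpow_le_zpow_right₀ hb.le hji)

namespace Config

variable {C C' : Config n}

lemma wbase_of_mem_QF {a : Fin n} (ha : a ∈ C.QF) : wbase C a = C.prF a := by
  rw [wbase, if_pos ha]
  exact C.bijF.card_filter_le_eq ha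

lemma wbase_of_mem_QP {a : Fin n} (ha : a ∈ C.QP) : wbase C a = C.prP a := by
  rw [wbase, if_neg (disjoint_right.1 C.disj ha)]
  exact C.bijP.card_filter_le_eq ha

def coveredVol (C : Config n) (x : ℝ) (a : Fin n) : ℝ :=
  if (wbase C a : ℝ) ≤ x then C.rem a else 0

lemma cov_eq_sum_coveredVol (x : ℝ) : cov C x = ∑ a ∈ C.QF ∪ C.QP, C.coveredVol x a := rfl

lemma coveredVol_nonneg {x : ℝ} {a : Fin n} (ha : 0 ≤ C.rem a) : 0 ≤ C.coveredVol x a := by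
  unfold coveredVol
  split_ifs <;> simp [ha]

lemma cov_add_sum_add_coveredVol_le {q : Fin n} {x y : ℝ} {T : Finset (Fin n)}
    (hq : q ∉ C.QF ∪ C.QP) (hU : C'.QF ∪ C'.QP = insert q (C.QF ∪ C.QP))
    (hrem : ∀ a ∈ C.QF ∪ C.QP, C'.rem a = C.rem a) (hrem₀ : ∀ a ∈ C.QF ∪ C.QP, 0 ≤ C.rem a)
    (hw : ∀ a ∈ C.QF ∪ C.QP, (wbase C a : ℝ) ≤ x → (wbase C' a : ℝ) ≤ y)
    (hT : T ⊆ C.QF ∪ C.QP) (hTw : ∀ a ∈ T, x < wbase C a ∧ (wbase C' a : ℝ) ≤ y) :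
    cov C x + ∑ a ∈ T, C.rem a + C'.coveredVol y q ≤ cov C' y := by
  have hmono : ∀ a ∈ C.QF ∪ C.QP, C.coveredVol x a ≤ C'.coveredVol y a := by
    intro a ha
    unfold coveredVol
    rw [hrem a ha]
    split_ifs with hx hy hy
    · exact le_rfl
    · exact absurd (hw a ha hx) hy
    · exact hrem₀ a ha
    · exact le_rfl
  have hT₀ : ∀ a ∈ T, C.coveredVol x a = 0 := fun a ha =>
    if_neg (hTw a ha).1.not_ge
  have hT₁ : ∀ a ∈ T, C'.coveredVol y a = C.rem a := fun a ha => by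
    rw [coveredVol, if_pos (hTw a ha).2, hrem a (hT ha)]
  rw [cov_eq_sum_coveredVol, cov_eq_sum_coveredVol, hU, sum_insert hq, ← sum_sdiff hT,
    ← sum_sdiff hT (f := C'.coveredVol y), sum_congr rfl hT₀, sum_congr rfl hT₁, sum_const_zero]
  have := sum_le_sum fun a (ha : a ∈ (C.QF ∪ C.QP) \ T) => hmono a (sdiff_subset ha)
  linarith

end Config

section Release

variable {μ : ℝ} {p pt : Fin n → ℝ} {C C' : Config n} {q : Fin n}

/-- The jobs `q₁, …, q_m` of the full bin in violation with the newly inserted `q`. -/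
abbrev violators (μ : ℝ) (pt : Fin n → ℝ) (C : Config n) (q : Fin n) : Finset (Fin n) :=
  C.QF.filter fun b => μ * pt b ≤ pt q

lemma prF_lt_prF_of_notMem_violators (hnv : NoViolations μ pt C)
    (hsep : ∀ a ∈ C.QF, μ * pt a ≤ pt q ∨ pt q ≤ pt a) {a b : Fin n} (ha : a ∈ C.QF)
    (ha' : a ∉ violators μ pt C q) (hb : b ∈ violators μ pt C q) : C.prF a < C.prF b := by
  obtain ⟨hbF, hbq⟩ := mem_filter.1 hb
  have hba : μ * pt b ≤ pt a :=
    hbq.trans ((hsep a ha).resolve_left fun h => ha' (mem_filter.2 ⟨ha, h⟩))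
  by_contra! hle
  rcases hle.lt_or_eq with hlt | heq
  · exact hnv a b ⟨ha, hbF, hlt, hba⟩
  · exact ha' (C.bijF.injOn hbF ha heq ▸ hb)

lemma rotatedPr_self_le_prF {b : Fin n} (hb : b ∈ violators μ pt C q) :
    rotatedPr μ pt C q q ≤ C.prF b := by
  rw [rotatedPr, if_pos rfl]
  exact unbotD_min_le (mem_image_of_mem _ hb)

lemma rotatedPr_self_le_card_add_one : rotatedPr μ pt C q q ≤ C.QF.card + 1 := by
  rw [rotatedPr, if_pos rfl]
  refine unbotD_min_le_default fun j hj => ?_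
  obtain ⟨b, hb, rfl⟩ := mem_image.1 hj
  exact (C.bijF.mapsTo (mem_filter.1 hb).1).2.trans (Nat.le_succ _)

lemma rotatedPr_of_notMem_violators {a : Fin n} (haq : a ≠ q)
    (ha : a ∉ violators μ pt C q) : rotatedPr μ pt C q a = C.prF a := by
  rw [rotatedPr, if_neg haq, if_neg ha]

lemma rotatedPr_of_mem_violators (hnv : NoViolations μ pt C)
    (hsep : ∀ a ∈ C.QF, μ * pt a ≤ pt q ∨ pt q ≤ pt a) (hq : q ∉ C.QF) {b : Fin n}
    (hb : b ∈ violators μ pt C q) : rotatedPr μ pt C q b = C.prF b + 1 := by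
  have hbF : b ∈ C.QF := (mem_filter.1 hb).1
  rw [rotatedPr, if_neg (ne_of_mem_of_not_mem hbF hq), if_pos hb]
  rcases (C.bijF.mapsTo hbF).2.lt_or_eq with hlt | htop
  · obtain ⟨c, hcF, hc⟩ := C.bijF.surjOn (Set.mem_Icc.2 ⟨Nat.le_add_left 1 _, hlt⟩)
    have hcS : c ∈ violators μ pt C q := by
      by_contra hcS
      exact absurd (prF_lt_prF_of_notMem_violators hnv hsep hcF hcS hb) (by omega)
    refine unbotD_min_eq_of_isLeast ⟨?_, ?_⟩
    · exact hc ▸ mem_image_of_mem _ (mem_filter.2 ⟨hcS, by omega⟩)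
    · rintro _ hj
      obtain ⟨d, hd, rfl⟩ := mem_image.1 hj
      exact (mem_filter.1 hd).2
  · rw [filter_eq_empty_iff.2 fun c hc => ?_, image_empty]
    · exact htop.symm ▸ rfl
    · exact ((C.bijF.mapsTo (mem_filter.1 hc).1).2.trans htop.ge).not_gt

end Release

namespace ReleaseStep

variable {μ : ℝ} {p pt : Fin n → ℝ} {C C' : Config n} {q : Fin n}

lemma wbase_of_mem_QF (hstep : ReleaseStep μ p pt C C' q) {a : Fin n} (ha : a ∈ insert q C.QF) :
    wbase C' a = rotatedPr μ pt C q a := by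
  obtain ⟨-, -, hQF, -, -, -, hpr, -⟩ := hstep
  rw [← hQF] at ha
  rw [Config.wbase_of_mem_QF ha, hpr a ha]

lemma wbase_self (hstep : ReleaseStep μ p pt C C' q) : wbase C' q = rotatedPr μ pt C q q :=
  hstep.wbase_of_mem_QF (mem_insert_self q C.QF)

lemma wbase_of_notMem_violators (hstep : ReleaseStep μ p pt C C' q) {a : Fin n} (ha : a ∈ C.QF)
    (ha' : a ∉ violators μ pt C q) : wbase C' a = wbase C a := by
  rw [hstep.wbase_of_mem_QF (mem_insert_of_mem ha),
    rotatedPr_of_notMem_violators (ne_of_mem_of_not_mem ha hstep.1) ha', Config.wbase_of_mem_QF ha]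

lemma wbase_le_add_one (hstep : ReleaseStep μ p pt C C' q) (hnv : NoViolations μ pt C)
    (hsep : ∀ a ∈ C.QF, μ * pt a ≤ pt q ∨ pt q ≤ pt a) {a : Fin n} (ha : a ∈ C.QF ∪ C.QP) :
    wbase C' a ≤ wbase C a + 1 := by
  rcases mem_union.1 ha with haF | haP
  · by_cases ha' : a ∈ violators μ pt C q
    · rw [hstep.wbase_of_mem_QF (mem_insert_of_mem haF),
        rotatedPr_of_mem_violators hnv hsep hstep.1 ha', Config.wbase_of_mem_QF haF]
    · rw [hstep.wbase_of_notMem_violators haF ha']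
      exact Nat.le_succ _
  · obtain ⟨-, -, -, hQP, -, -, -, hpr⟩ := hstep
    rw [Config.wbase_of_mem_QP (hQP ▸ haP : a ∈ C'.QP), Config.wbase_of_mem_QP haP, hpr a haP]
    exact Nat.le_succ _

end ReleaseStep

theorem cov_add_le_cov_of_releaseStep {μ : ℝ} {p pt : Fin n → ℝ} {C C' : Config n} {q : Fin n}
    {θ : ℕ} (hθ : 1 ≤ θ) (hpq₀ : 0 ≤ p q) (hpq : p q ≤ θ * pt q)
    (hsep : ∀ a ∈ C.QF, μ * pt a ≤ pt q ∨ pt q ≤ pt a) (hremF : ∀ a ∈ C.QF, pt a ≤ C.rem a)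
    (hrem : ∀ a, 0 ≤ C.rem a) (hnv : NoViolations μ pt C) (hstep : ReleaseStep μ p pt C C' q)
    {x : ℝ} (hx : 0 ≤ x) : cov C x + p q ≤ cov C' (x + θ) := by
  have ⟨hqF, hqP, hQF, hQP, hremq, hrem', _⟩ := hstep
  have hq : q ∉ C.QF ∪ C.QP := by simp [hqF, hqP]
  have hU : C'.QF ∪ C'.QP = insert q (C.QF ∪ C.QP) := by rw [hQF, hQP, insert_union]
  have hw (a) (ha : a ∈ C.QF ∪ C.QP) (hax : (wbase C a : ℝ) ≤ x) : (wbase C' a : ℝ) ≤ x + θ := by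
    have : (wbase C' a : ℝ) ≤ wbase C a + 1 := by exact_mod_cast hstep.wbase_le_add_one hnv hsep ha
    have : (1 : ℝ) ≤ θ := by exact_mod_cast hθ
    linarith
  have gain (T : Finset (Fin n)) := Config.cov_add_sum_add_coveredVol_le (T := T) hq hU
    (fun a ha => hrem' a (ne_of_mem_of_not_mem ha hq)) (fun a _ => hrem a) hw
  by_cases hk : (rotatedPr μ pt C q q : ℝ) ≤ x + θ
  · have hcq : C'.coveredVol (x + θ) q = p q := by
      rw [Config.coveredVol, if_pos (hstep.wbase_self ▸ hk), hremq]
    simpa [hcq] using gain ∅ (empty_subset _) (by simp)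
  · set T := {a ∈ C.QF | x < C.prF a ∧ (C.prF a : ℝ) ≤ x + θ}
    have hTS (a) (ha : a ∈ T) : a ∉ violators μ pt C q := fun hS =>
      hk ((Nat.cast_le.2 (rotatedPr_self_le_prF hS)).trans (mem_filter.1 ha).2.2)
    have hTw (a) (ha : a ∈ T) : x < wbase C a ∧ (wbase C' a : ℝ) ≤ x + θ := by
      obtain ⟨haF, hax⟩ := mem_filter.1 ha
      rw [hstep.wbase_of_notMem_violators haF (hTS a ha), Config.wbase_of_mem_QF haF]
      exact hax
    have hcard : θ ≤ #T := C.bijF.le_card_filter_Ioc hx <|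
      (not_le.1 hk).trans_le (by exact_mod_cast rotatedPr_self_le_card_add_one)
    have hsum : p q ≤ ∑ a ∈ T, C.rem a := calc
      p q ≤ θ * pt q := hpq
      _ ≤ #T * pt q := by
        have hθ₀ : (0 : ℝ) < θ := by exact_mod_cast hθ
        gcongr
        exact nonneg_of_mul_nonneg_right (hpq₀.trans hpq) hθ₀
      _ ≤ ∑ a ∈ T, C.rem a := by
        rw [← nsmul_eq_mul, ← sum_const]
        refine sum_le_sum fun a ha => ?_
        have haF := (mem_filter.1 ha).1
        exact ((hsep a haF).resolve_left fun h => hTS a ha (mem_filter.2 ⟨haF, h⟩)).trans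
          (hremF a haF)
    linarith [gain T ((filter_subset _ _).trans subset_union_left) hTw,
      Config.coveredVol_nonneg (x := x + θ) (hremq ▸ hpq₀ : 0 ≤ C'.rem q)]

/-- Run Algorithm 2 in the semiclairvoyant model `SC[ρ]` (the
predictions are `p̃(q) = ρ^{⌊log_ρ p(q)⌋}` and the parameter is `μ = ρ`), and let
`θ' = ⌈ρ⌉`.  If a job `q` is released at time `t` (the configuration just before the
release having, per the invariants of the run, full jobs in the full bin and no
violations), then for every `x ≥ 0`: `cov(x + θ', t) ≥ cov(x, t⁻) + p(q)`. -/
theorem semiclairvoyant_release_cov_gain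
    (n : ℕ) (ρ : ℝ) (hρ : 1 < ρ) (p pt : Fin n → ℝ)
    (hp : ∀ q, 0 < p q)
    (hpt : ∀ q, pt q = ρ ^ ⌊Real.logb ρ (p q)⌋)
    (C C' : Config n) (q : Fin n)
    (hfull : ∀ a ∈ C.QF, C.rem a = p a)
    (hrem : ∀ a, 0 ≤ C.rem a)
    (hnv : NoViolations ρ pt C)
    (hstep : ReleaseStep ρ p pt C C' q) :
    ∀ x : ℝ, 0 ≤ x → cov C x + p q ≤ cov C' (x + ((⌈ρ⌉ : ℤ) : ℝ)) := by
  intro x hx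
  rw [← natCast_ceil_eq_intCast_ceil (zero_le_one.trans hρ.le)]
  have hpq : p q ≤ ⌈ρ⌉₊ * pt q := calc
    p q ≤ ρ * pt q := (hpt q ▸ Real.lt_mul_zpow_floor_logb hρ (hp q)).le
    _ ≤ ⌈ρ⌉₊ * pt q := by
      gcongr
      · exact hpt q ▸ zpow_nonneg (by positivity) _
      · exact Nat.le_ceil ρ
  refine cov_add_le_cov_of_releaseStep (Nat.one_le_iff_ne_zero.2 (by positivity)) (hp q).le hpq
    (fun a _ => hpt a ▸ hpt q ▸ mul_zpow_le_zpow_or_zpow_le_zpow hρ _ _)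
    (fun a ha => hfull a ha ▸ hpt a ▸ Real.zpow_floor_logb_le hρ (hp a)) hrem hnv hstep hx
end
end
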